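/- Let B = σ(A)⟨x_1,…,x_n⟩ be a skew PBW extension of A with σ_i = id_A for all i; q_{ij} and a_{ij}^{(t)} lying in the center Z(A) with every q_{ij} invertible in A; δ_1 = 0; δ_t(q_{ij}) = δ_t(a_{ij}^{(m)}) = 0 for all m = 0,…,n and i,j,t = 1,…,n; and p_{1j} = 0 for all j. Then the Ore localization D := B S^{-1} of B at S := {x_1^m : m ∈ ℕ} exists, B embeds in D, and D is an extension of A of type O_{q,δ}^{1,n} with the same properties: D is a free left A-module with basis the monomials x_1^{α_1} x_2^{α_2}⋯x_n^{α_n} for (α_1,…,α_n) ∈ ℤ × ℕ^{n−1} (with x_1 invertible in D), the images of the x_i satisfy the same commutation relations x_j x_i = q_{ij} x_i x_j + Σ_t a_{ij}^{(t)} x_t and x_i a = a x_i + δ_i(a) for a ∈ A, and the induced derivations satisfy δ̄_1 = 0 and δ̄_t(q_{ij}) = δ̄_t(a_{ij}^{(m)}) = 0 for all indices. -/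

import Mathlib

/-- An extension `R = O_{q,δ}^{r,n}` of a ring `A`. -/
structure OExt (A : Type*) (R : Type*) [Ring A] [Ring R] (n r : ℕ) where
  hr : 1 ≤ r
  hrn : r ≤ n
  ι : A →+* R
  hι : Function.Injective ι
  x : Fin n → R
  xinv : Fin n → R
  x_mul_xinv : ∀ i : Fin n, i.val < r → x i * xinv i = 1
  xinv_mul_x : ∀ i : Fin n, i.val < r → xinv i * x i = 1
  δ : Fin n → A → A
  δ_add : ∀ i a b, δ i (a + b) = δ i a + δ i b
  δ_mul : ∀ i a b, δ i (a * b) = δ i a * b + a * δ i b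
  x_comm : ∀ (i : Fin n) (a : A), x i * ι a = ι a * x i + ι (δ i a)
  q : Fin n → Fin n → Aˣ
  q_central : ∀ i j (b : A), (q i j : A) * b = b * (q i j : A)
  q_diag : ∀ i, q i i = 1
  q_inv : ∀ i j : Fin n, i < j → q j i = (q i j)⁻¹
  a0 : Fin n → Fin n → A
  ac : Fin n → Fin n → Fin n → A
  a0_central : ∀ i j (b : A), a0 i j * b = b * a0 i j
  ac_central : ∀ i j t (b : A), ac i j t * b = b * ac i j t
  rel : ∀ i j : Fin n, i < j →
    x j * x i = ι (q i j) * (x i * x j) + ι (a0 i j) + ∑ t : Fin n, ι (ac i j t) * x t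
  free : ∀ f : R, ∃! c : (Fin n → ℤ) →₀ A,
    (∀ v ∈ c.support, ∀ i : Fin n, r ≤ i.val → 0 ≤ v i) ∧
    f = c.sum fun v a => ι a *
      ((List.finRange n).map fun i =>
        if 0 ≤ v i then x i ^ (v i).toNat else xinv i ^ (-(v i)).toNat).prod

namespace OExt

variable {A R : Type*} [Ring A] [Ring R] {n r : ℕ} (E : OExt A R n r)

/-- The index of the first variable `x_1`. -/
def i1 : Fin n := ⟨0, Nat.lt_of_lt_of_le E.hr E.hrn⟩

/-- Membership in the exponent set `Z = ℤ^r × ℕ^{n-r}`. -/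
def InZ (_E : OExt A R n r) (v : Fin n → ℤ) : Prop := ∀ i : Fin n, r ≤ i.val → 0 ≤ v i

/-- `x_i^k` for `k : ℤ` (using `xinv` for negative exponents). -/
def xpow (i : Fin n) (k : ℤ) : R :=
  if 0 ≤ k then E.x i ^ k.toNat else E.xinv i ^ (-k).toNat

/-- The monomial `x_1^{v_1} ⋯ x_n^{v_n}`. -/
def mon (v : Fin n → ℤ) : R :=
  ((List.finRange n).map fun i => E.xpow i (v i)).prod

/-- `f = 0` is excluded; `DegLt f N` says `f` is an `A`-combination of basis monomials of
total degree `< N`; by freeness this says `deg f < N`. -/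
def DegLt (f : R) (N : ℤ) : Prop :=
  ∃ c : (Fin n → ℤ) →₀ A,
    (∀ v ∈ c.support, E.InZ v ∧ (∑ i, v i) < N) ∧
    f = c.sum fun v a => E.ι a * E.mon v

/-- `p_{ij}(x_1,…,x_n) = a_{ij}^{(0)} + Σ_t a_{ij}^{(t)} x_t`. -/
def pij (i j : Fin n) : R := E.ι (E.a0 i j) + ∑ t : Fin n, E.ι (E.ac i j t) * E.x t

/-- The standing assumptions on `O_{q,δ}^{r,n}`. -/
structure Standing : Prop where
  δ1 : ∀ a : A, E.δ E.i1 a = 0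
  qunit : ∀ i : Fin n, ∀ m : Fin n → ℤ, E.InZ m → m ≠ 0 →
    IsUnit ((1 : A) -
      ((((List.finRange n).map fun j =>
        if j = i then (1 : Aˣ) else E.q i j ^ m j).prod : Aˣ) : A))
  δq : ∀ t i j : Fin n, E.δ t (E.q i j : A) = 0
  δa0 : ∀ t i j : Fin n, E.δ t (E.a0 i j) = 0
  δac : ∀ t i j m : Fin n, E.δ t (E.ac i j m) = 0
  a0_first : ∀ j : Fin n, E.a0 E.i1 j = 0
  ac_vanish : ∀ i j t : Fin n, i.val < r → i < j → i ≤ t → E.ac i j t = 0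

/-- A toric automorphism `γ` of `R`: `γ(x_i) = γ_i x_i`. -/
structure ToricAut where
  γ : R ≃+* R
  c : Fin n → A
  hc : ∀ i, γ (E.x i) = E.ι (c i) * E.x i

/-- `[ad_γ z] a = z a − γ(a) z`. -/
def adg (γfun : R → R) (z a : R) : R := z * a - γfun a * z

/-- A twisted derivation `d` on `R`. -/
structure TwistedDer where
  d : R → R
  d_add : ∀ a b, d (a + b) = d a + d b
  γ : E.ToricAut
  N : ℕ
  θ : Fin N → A
  α : Fin N → E.ToricAut
  β : Fin N → E.ToricAut
  d_mul : ∀ a b, d (a * b) =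
    d a * b + γ.γ a * d b + ∑ s : Fin N, E.ι (θ s) * ((α s).γ a * ((β s).γ b))

/-- Equation (1) for a tuple `u` with constants `θij, θh, K, K', θ`. -/
def Eq1 (γ : E.ToricAut) (u : Fin n → R) (θij θh K K' : Fin n → Fin n → A) (θ : A) : Prop :=
  ∀ i j : Fin n, i < j →
    u j * E.x i + γ.γ (E.x j) * u i - E.ι (E.q i j) * (u i * E.x j)
      - E.ι (E.q i j) * (γ.γ (E.x i) * u j)
      + E.ι (θij i j) * (E.x i * E.x j) + E.ι (K i j) * E.x i + E.ι (K' i j) * E.x j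
      + E.ι (θh i j) * E.pij i j
      - (∑ t : Fin n, E.ι (E.ac i j t) * u t)
      + E.ι (E.a0 i j) * E.ι θ = 0

end OExt

/-- A Poisson bracket on a ring `S`. -/
structure PoissonBracket (S : Type*) [Ring S] where
  br : S → S → S
  add_left : ∀ a b c, br (a + b) c = br a c + br b c
  add_right : ∀ a b c, br a (b + c) = br a b + br a c
  br_self : ∀ a, br a a = 0
  jacobi : ∀ a b c, br a (br b c) + br b (br c a) + br c (br a b) = 0
  leibniz : ∀ a b c, br (a * b) c = br a c * b + a * br b c
  antisymm : ∀ a b, br a b + br b a = 0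

/-- A skew PBW extension `B = σ(A)⟨x_1,…,x_n⟩` of a ring `A`. -/
structure SkewPBW (A : Type*) (B : Type*) [Ring A] [Ring B] (n : ℕ) where
  ι : A →+* B
  hι : Function.Injective ι
  x : Fin n → B
  σ : Fin n → A →+* A
  hσ : ∀ i, Function.Injective (σ i)
  δ : Fin n → A → A
  δ_add : ∀ i a b, δ i (a + b) = δ i a + δ i b
  δ_mul : ∀ i a b, δ i (a * b) = σ i a * δ i b + δ i a * b
  x_comm : ∀ (i : Fin n) (a : A), x i * ι a = ι (σ i a) * x i + ι (δ i a)
  q : Fin n → Fin n → A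
  q_leftinv : ∀ i j : Fin n, i < j → ∃ u : A, u * q i j = 1
  a0 : Fin n → Fin n → A
  ac : Fin n → Fin n → Fin n → A
  rel : ∀ i j : Fin n, i < j →
    x j * x i = ι (q i j) * (x i * x j) + ι (a0 i j) + ∑ t : Fin n, ι (ac i j t) * x t
  free : ∀ f : B, ∃! c : (Fin n → ℕ) →₀ A,
    f = c.sum fun v a => ι a * ((List.finRange n).map fun i => x i ^ v i).prod

/-- The data of an Ore localization of a skew PBW extension `B` at the powers of `x_1`:
a ring `D` in which `B` embeds, which is an extension of `A` of type `O_{q,δ}^{1,n}`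
with the same constants. -/
structure SkewPBWLoc (A B : Type) [Ring A] [Ring B] (n : ℕ) (S : SkewPBW A B n) where
  D : Type
  [instD : Ring D]
  φ : B →+* D
  hφ : Function.Injective φ
  E : OExt A D n 1
  hEι : E.ι = φ.comp S.ι
  hEx : ∀ i, E.x i = φ (S.x i)
  hEq : ∀ i j : Fin n, i < j → (E.q i j : A) = S.q i j
  hEa0 : E.a0 = S.a0
  hEac : E.ac = S.ac
  hEδ : E.δ = S.δ

attribute [instance] SkewPBWLoc.instD

/-!
Because `σ = id`, `δ₁ = 0` and `p₁ⱼ = 0`, the variable `x₁` (that is, `S.x 0`) commutes with `A`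
and `xⱼ x₁ = q₁ⱼ x₁ xⱼ`, where the `q₁ⱼ` are central units killed by every `δₜ`. Hence every
standard monomial satisfies `x^v x₁ = t_v x₁ x^v` for a unit `t_v ∈ A`, while `x₁ x^v` is again
a standard monomial. Comparing coefficients in the PBW basis, `x₁` is regular on both sides and
`x₁ B = B x₁`, so the powers of `x₁` form an Ore set and `B` embeds in the localization `D`.
Every element of `D` is `x₁^{-k} f` with `f ∈ B`, which yields the basis `x^w`,
`w ∈ ℤ × ℕ^{n-1}`; a relation among these becomes a relation in `B` after multiplication by a
large power of `x₁`. The relations, derivations and constants of `D` are those of `B`.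
-/

open OreLocalization

section PowersOre

variable {R : Type*} [Ring R] {x : R}

theorem exists_pow_mul_eq_mul_pow (hx : ∀ r, ∃ r', x * r = r' * x) (k : ℕ) (r : R) :
    ∃ r', x ^ k * r = r' * x ^ k := by
  induction k generalizing r with
  | zero => exact ⟨r, by simp⟩
  | succ k ih =>
    obtain ⟨r₁, h₁⟩ := hx r
    obtain ⟨r₂, h₂⟩ := ih r₁
    exact ⟨r₂, by rw [pow_succ, mul_assoc, h₁, ← mul_assoc, h₂, mul_assoc, ← pow_succ]⟩

theorem nonempty_oreSet_powers (hreg : IsRightRegular x) (hx : ∀ r, ∃ r', x * r = r' * x) :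
    Nonempty (OreSet (Submonoid.powers x)) := by
  refine nonempty_oreSet_iff.2 ⟨fun r₁ r₂ ⟨s, k, hk⟩ h => ⟨1, ?_⟩, fun r ⟨s, k, hk⟩ => ?_⟩
  · subst hk
    rw [(hreg.pow k) h]
  · obtain ⟨r', h⟩ := exists_pow_mul_eq_mul_pow hx k r
    subst hk
    exact ⟨r', ⟨_, k, rfl⟩, h⟩

variable [OreSet (Submonoid.powers x)]

theorem numeratorRingHom_powers_injective (hreg : IsLeftRegular x) :
    Function.Injective (numeratorRingHom : R →+* OreLocalization (Submonoid.powers x) R) :=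
  numeratorHom_inj <| le_nonZeroDivisorsLeft_iff_isLeftRegular.2 fun ⟨_, k, hk⟩ => hk ▸ hreg.pow k

theorem exists_eq_zpow_neg_mul_numeratorRingHom (d : OreLocalization (Submonoid.powers x) R) :
    ∃ (r : R) (k : ℕ), d =
      (↑(numeratorUnit ⟨x, Submonoid.mem_powers x⟩ ^ (-(k : ℤ))) :
        OreLocalization (Submonoid.powers x) R) * numeratorRingHom r := by
  induction d using OreLocalization.ind with
  | _ r s =>
    obtain ⟨s, k, rfl⟩ := s
    refine ⟨r, k, ?_⟩
    have hs : numeratorUnit ⟨x, Submonoid.mem_powers x⟩ ^ k =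
        numeratorUnit (⟨x ^ k, k, rfl⟩ : Submonoid.powers x) := by
      ext
      exact (map_pow (numeratorHom (S := Submonoid.powers x)) x k).symm
    rw [zpow_neg, zpow_natCast, hs]
    exact (OreLocalization.one_div_mul.trans (by rw [one_mul])).symm

end PowersOre

theorem Finsupp.exists_eq_mapDomain_natCast {ι M : Type*} [AddCommMonoid M] {e : (ι → ℤ) →₀ M}
    (he : ∀ w ∈ e.support, ∀ i, 0 ≤ w i) :
    ∃ c : (ι → ℕ) →₀ M, e = c.mapDomain fun v i => (v i : ℤ) := by
  have hinj : Function.Injective fun (v : ι → ℕ) i => (v i : ℤ) :=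
    fun v w h => funext fun i => Int.natCast_inj.1 (congrFun h i)
  refine ⟨e.comapDomain _ hinj.injOn, (mapDomain_comapDomain _ hinj e fun w hw => ?_).symm⟩
  exact ⟨fun i => (w i).toNat, funext fun i => Int.toNat_of_nonneg (he w hw i)⟩

theorem ite_pow_eq_zpow {M : Type*} [Monoid M] (u : Mˣ) (z : ℤ) :
    (if 0 ≤ z then (u : M) ^ z.toNat else ↑u⁻¹ ^ (-z).toNat) = ↑(u ^ z) := by
  obtain ⟨k, rfl | rfl⟩ := Int.eq_nat_or_neg z
  · simp
  · rcases k.eq_zero_or_pos with rfl | hk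
    · simp
    · rw [if_neg (by omega)]
      simp

theorem List.prod_map_mul_eq {M ι : Type*} [Monoid M] (a z : ι → M) (y : M)
    (h : ∀ i, a i * y = z i * (y * a i)) (hza : ∀ i j, Commute (z i) (a j))
    (hzz : ∀ i j, Commute (z i) (z j)) (l : List ι) :
    (l.map a).prod * y = (l.map z).prod * (y * (l.map a).prod) := by
  induction l with
  | nil => simp
  | cons i l ih =>
    have hZa : Commute (l.map z).prod (a i) :=
      Commute.list_prod_left _ _ fun _ hw => by
        obtain ⟨j, -, rfl⟩ := List.mem_map.1 hw
        exact hza j i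
    have hZz : Commute (l.map z).prod (z i) :=
      Commute.list_prod_left _ _ fun _ hw => by
        obtain ⟨j, -, rfl⟩ := List.mem_map.1 hw
        exact hzz j i
    simp only [List.map_cons, List.prod_cons]
    rw [mul_assoc, ih, ← mul_assoc, ← hZa.eq, mul_assoc, ← mul_assoc (a i), h]
    simp only [← mul_assoc, hZz.eq]

theorem pow_mul_eq_of_mul_eq {M : Type*} [Monoid M] {a y z : M} (h : a * y = z * (y * a))
    (hza : Commute z a) (k : ℕ) : a ^ k * y = z ^ k * (y * a ^ k) := by
  simpa using List.prod_map_mul_eq (fun _ : Unit => a) (fun _ => z) y (fun _ => h)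
    (fun _ _ => hza) (fun _ _ => Commute.refl z) (List.replicate k ())

namespace SkewPBW

section Basic

variable {A B : Type*} [Ring A] [Ring B] {n : ℕ} (S : SkewPBW A B n)

theorem δ_one (i : Fin n) : S.δ i 1 = 0 := by
  simpa using S.δ_mul i 1 1

theorem δ_units_inv {i : Fin n} {u : Aˣ} (hu : S.δ i u = 0) : S.δ i ↑u⁻¹ = 0 := by
  have h := S.δ_mul i ↑u⁻¹ u
  rw [Units.inv_mul, δ_one, hu, mul_zero, zero_add] at h
  exact (Units.mul_left_eq_zero u).1 h.symm

theorem commute_x_ι {i : Fin n} {a : A} (hσ : S.σ i a = a) (hδ : S.δ i a = 0) :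
    Commute (S.x i) (S.ι a) := by
  have h := S.x_comm i a
  rwa [hσ, hδ, map_zero, add_zero] at h

def mon (v : Fin n → ℕ) : B := ((List.finRange n).map fun i => S.x i ^ v i).prod

def linComb (c : (Fin n → ℕ) →₀ A) : B := c.sum fun v a => S.ι a * S.mon v

theorem linComb_surjective : Function.Surjective S.linComb :=
  fun f => (S.free f).exists.imp fun _ h => h.symm

theorem linComb_injective : Function.Injective S.linComb :=
  fun _ _ h => (S.free _).unique h.symm rfl

noncomputable def qUnit (hq : ∀ i j, i < j → IsUnit (S.q i j)) (i j : Fin n) : Aˣ :=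
  if h : i < j then (hq i j h).unit else if h' : j < i then (hq j i h').unit⁻¹ else 1

variable {S} {hq : ∀ i j, i < j → IsUnit (S.q i j)}

theorem qUnit_of_lt {i j : Fin n} (h : i < j) : (S.qUnit hq i j : A) = S.q i j := by
  rw [qUnit, dif_pos h, IsUnit.unit_spec]

theorem qUnit_self (i : Fin n) : S.qUnit hq i i = 1 := by
  simp [qUnit]

theorem qUnit_swap {i j : Fin n} (h : i < j) : S.qUnit hq j i = (S.qUnit hq i j)⁻¹ := by
  rw [qUnit, qUnit, dif_neg (asymm h), dif_pos h, dif_pos h]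

theorem qUnit_commute (hqc : ∀ i j b, S.q i j * b = b * S.q i j) (i j : Fin n) (b : A) :
    Commute (S.qUnit hq i j : A) b := by
  unfold qUnit
  split_ifs with h h'
  · exact hqc i j b
  · exact Commute.units_inv_left (hqc j i b)
  · exact Commute.one_left b

theorem δ_qUnit (hδq : ∀ t i j, S.δ t (S.q i j) = 0) (t i j : Fin n) :
    S.δ t (S.qUnit hq i j) = 0 := by
  unfold qUnit
  split_ifs with h h'
  · exact hδq t i j
  · exact S.δ_units_inv (hδq t j i)
  · exact S.δ_one t

end Basic

section FirstVariable

variable {A B : Type*} [Ring A] [Ring B] {m : ℕ} (S : SkewPBW A B (m + 1))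

theorem x_mul_x_zero {hq : ∀ i j, i < j → IsUnit (S.q i j)} (ha0 : ∀ j, S.a0 0 j = 0)
    (hac : ∀ j t, S.ac 0 j t = 0) (j : Fin (m + 1)) :
    S.x j * S.x 0 = S.ι (S.qUnit hq 0 j) * (S.x 0 * S.x j) := by
  rcases (Fin.zero_le j).lt_or_eq with h | rfl
  · simpa [qUnit_of_lt h, ha0, hac] using S.rel 0 j h
  · simp [qUnit_self]

theorem exists_mon_mul_x_zero (hσ : ∀ i a, S.σ i a = a) (hqc : ∀ i j b, S.q i j * b = b * S.q i j)
    (hq : ∀ i j, i < j → IsUnit (S.q i j)) (hδq : ∀ t i j, S.δ t (S.q i j) = 0)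
    (ha0 : ∀ j, S.a0 0 j = 0) (hac : ∀ j t, S.ac 0 j t = 0) (v : Fin (m + 1) → ℕ) :
    ∃ t : Aˣ, S.mon v * S.x 0 = S.ι t * (S.x 0 * S.mon v) := by
  have hqx : ∀ i j, Commute (S.ι (S.qUnit hq 0 j)) (S.x i) := fun i j =>
    (S.commute_x_ι (hσ i _) (δ_qUnit hδq i 0 j)).symm
  refine ⟨((List.finRange (m + 1)).map fun j => S.qUnit hq 0 j ^ v j).prod, ?_⟩
  have h := List.prod_map_mul_eq (fun j => S.x j ^ v j) (fun j => S.ι (S.qUnit hq 0 j) ^ v j)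
    (S.x 0) (fun j => pow_mul_eq_of_mul_eq (S.x_mul_x_zero ha0 hac j) (hqx j j) (v j))
    (fun i j => ((hqx j i).pow_left _).pow_right _)
    (fun i j => (((qUnit_commute hqc 0 i _).map S.ι).pow_left _).pow_right _)
    (List.finRange (m + 1))
  rw [← Units.coeHom_apply, map_list_prod, map_list_prod, List.map_map, List.map_map]
  simpa [mon, Function.comp_def] using h

theorem x_zero_mul_mon (v : Fin (m + 1) → ℕ) : S.x 0 * S.mon v = S.mon (v + Pi.single 0 1) := by
  simp only [mon, List.finRange_succ, List.map_cons, List.prod_cons, List.map_map]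
  rw [← mul_assoc, Pi.add_apply, Pi.single_eq_same, pow_succ']
  congr 3

variable {S}

theorem x_zero_mul_linComb (hx : ∀ a, Commute (S.x 0) (S.ι a)) (c : (Fin (m + 1) → ℕ) →₀ A) :
    S.x 0 * S.linComb c = S.linComb (c.mapDomain (· + Pi.single 0 1)) := by
  rw [linComb, linComb, Finsupp.sum_mapDomain_index (by simp) (by simp [add_mul]),
    Finsupp.mul_sum]
  refine Finsupp.sum_congr fun v _ => ?_
  rw [← mul_assoc, (hx _).eq, mul_assoc, x_zero_mul_mon]

theorem isLeftRegular_x_zero (hx : ∀ a, Commute (S.x 0) (S.ι a)) : IsLeftRegular (S.x 0) := by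
  intro f g h
  obtain ⟨c, rfl⟩ := S.linComb_surjective f
  obtain ⟨d, rfl⟩ := S.linComb_surjective g
  simp only [x_zero_mul_linComb hx] at h
  rw [Finsupp.mapDomain_injective (add_left_injective _) (S.linComb_injective h)]

theorem sum_mul_x_zero (hx : ∀ a, Commute (S.x 0) (S.ι a)) {t : (Fin (m + 1) → ℕ) → A}
    (ht : ∀ v, S.mon v * S.x 0 = S.ι (t v) * (S.x 0 * S.mon v)) (s : Finset (Fin (m + 1) → ℕ))
    (a : (Fin (m + 1) → ℕ) → A) :
    (∑ v ∈ s, S.ι (a v) * S.mon v) * S.x 0 = S.x 0 * ∑ v ∈ s, S.ι (a v * t v) * S.mon v := by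
  rw [Finset.sum_mul, Finset.mul_sum]
  refine Finset.sum_congr rfl fun v _ => ?_
  rw [mul_assoc, ht, ← mul_assoc, ← mul_assoc, ← map_mul, ← (hx _).eq, mul_assoc]

-- `f x₁ = x₁ f'`, where `f'` has the coefficients of `f` times the units `t v`; then use left
-- regularity.
theorem isRightRegular_x_zero (hx : ∀ a, Commute (S.x 0) (S.ι a))
    (ht : ∀ v, ∃ t : Aˣ, S.mon v * S.x 0 = S.ι t * (S.x 0 * S.mon v)) :
    IsRightRegular (S.x 0) := by
  choose t ht using ht
  refine isRightRegular_iff_left_eq_zero_of_mul.2 fun f hf => ?_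
  obtain ⟨c, rfl⟩ := S.linComb_surjective f
  let d := Finsupp.onFinset c.support (fun v => c v * t v) fun v hv =>
    Finsupp.mem_support_iff.2 fun hc => hv (by rw [hc, zero_mul])
  have hd : S.linComb c * S.x 0 = S.x 0 * S.linComb d := by
    rw [linComb, Finsupp.sum, sum_mul_x_zero hx ht, linComb, Finsupp.onFinset_sum _ (by simp)]
  rw [hd, ← mul_zero (S.x 0)] at hf
  have hd0 : d = 0 := S.linComb_injective ((isLeftRegular_x_zero hx hf).trans (by simp [linComb]))
  have hc : c = 0 := by
    ext v
    simpa [d] using DFunLike.congr_fun hd0 v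
  simp [hc, linComb]

theorem exists_x_zero_mul_eq_mul_x_zero (hx : ∀ a, Commute (S.x 0) (S.ι a))
    (ht : ∀ v, ∃ t : Aˣ, S.mon v * S.x 0 = S.ι t * (S.x 0 * S.mon v)) (f : B) :
    ∃ g, S.x 0 * f = g * S.x 0 := by
  choose t ht using ht
  obtain ⟨c, rfl⟩ := S.linComb_surjective f
  refine ⟨∑ v ∈ c.support, S.ι (c v * ↑(t v)⁻¹) * S.mon v, ?_⟩
  rw [sum_mul_x_zero hx ht]
  simp [linComb, Finsupp.sum]

end FirstVariable

section Localization

variable {A B : Type*} [Ring A] [Ring B] {m : ℕ} (S : SkewPBW A B (m + 1))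

variable [OreSet (Submonoid.powers (S.x 0))]

abbrev Loc : Type _ := OreLocalization (Submonoid.powers (S.x 0)) B

noncomputable def x0Unit : S.Locˣ := numeratorUnit ⟨S.x 0, Submonoid.mem_powers _⟩

-- The monomials of `OExt.free` with `xinv i := x₁⁻¹` for every `i`; in the basis only `i = 0`
-- carries a negative exponent.
noncomputable def zmon (w : Fin (m + 1) → ℤ) : S.Loc :=
  ((List.finRange (m + 1)).map fun i =>
    if 0 ≤ w i then numeratorRingHom (S.x i) ^ (w i).toNat else ↑S.x0Unit⁻¹ ^ (-w i).toNat).prod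

noncomputable def zLinComb (e : (Fin (m + 1) → ℤ) →₀ A) : S.Loc :=
  e.sum fun w a => numeratorRingHom (S.ι a) * S.zmon w

theorem zmon_add_single (w : Fin (m + 1) → ℤ) (k : ℤ) :
    S.zmon (w + Pi.single 0 k) = ↑(S.x0Unit ^ k) * S.zmon w := by
  simp only [zmon, List.finRange_succ, List.map_cons, List.prod_cons, List.map_map]
  rw [← mul_assoc, Pi.add_apply, Pi.single_eq_same,
    show (numeratorRingHom (S.x 0) : S.Loc) = S.x0Unit from rfl, ite_pow_eq_zpow,
    ite_pow_eq_zpow, ← Units.val_mul, ← zpow_add, add_comm k]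
  congr 3
  funext i
  simp

theorem zmon_natCast (v : Fin (m + 1) → ℕ) :
    S.zmon (fun i => (v i : ℤ)) = numeratorRingHom (S.mon v) := by
  rw [zmon, mon, map_list_prod, List.map_map]
  refine congrArg List.prod (List.map_congr_left fun i _ => ?_)
  rw [if_pos (Int.natCast_nonneg _), Int.toNat_natCast, Function.comp_apply, map_pow]

variable {S}

theorem commute_x0Unit_zpow (hx : ∀ a, Commute (S.x 0) (S.ι a)) (k : ℤ) (a : A) :
    Commute (↑(S.x0Unit ^ k) : S.Loc) (numeratorRingHom (S.ι a)) :=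
  Commute.units_zpow_left ((hx a).map numeratorRingHom) k

theorem zLinComb_mapDomain_add_single (hx : ∀ a, Commute (S.x 0) (S.ι a))
    (e : (Fin (m + 1) → ℤ) →₀ A) (k : ℤ) :
    S.zLinComb (e.mapDomain (· + Pi.single 0 k)) = (↑(S.x0Unit ^ k) : S.Loc) * S.zLinComb e := by
  rw [zLinComb, zLinComb, Finsupp.mul_sum,
    Finsupp.sum_mapDomain_index (by simp) fun _ _ _ => by rw [map_add, map_add, add_mul]]
  refine Finsupp.sum_congr fun w _ => ?_
  rw [zmon_add_single, ← mul_assoc, ← mul_assoc, (commute_x0Unit_zpow hx k _).eq]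

theorem zLinComb_mapDomain_natCast (c : (Fin (m + 1) → ℕ) →₀ A) :
    S.zLinComb (c.mapDomain fun v i => (v i : ℤ)) = numeratorRingHom (S.linComb c) := by
  rw [zLinComb, linComb, map_finsuppSum,
    Finsupp.sum_mapDomain_index (by simp) fun _ _ _ => by rw [map_add, map_add, add_mul]]
  simp [zmon_natCast]

theorem exists_zLinComb_eq (hx : ∀ a, Commute (S.x 0) (S.ι a)) (f : S.Loc) :
    ∃ e : (Fin (m + 1) → ℤ) →₀ A,
      (∀ w ∈ e.support, ∀ i : Fin (m + 1), 1 ≤ i.val → 0 ≤ w i) ∧ f = S.zLinComb e := by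
  classical
  obtain ⟨r, k, rfl⟩ := exists_eq_zpow_neg_mul_numeratorRingHom f
  obtain ⟨c, rfl⟩ := S.linComb_surjective r
  refine ⟨(c.mapDomain fun v i => (v i : ℤ)).mapDomain (· + Pi.single 0 (-(k : ℤ))), ?_, ?_⟩
  · intro w hw i hi
    obtain ⟨u, hu, rfl⟩ := Finset.mem_image.1 (Finsupp.mapDomain_support hw)
    obtain ⟨v, -, rfl⟩ := Finset.mem_image.1 (Finsupp.mapDomain_support hu)
    simp [Pi.single_eq_of_ne (Fin.val_ne_zero_iff.1 (by omega) : i ≠ 0)]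
  · rw [zLinComb_mapDomain_add_single hx, zLinComb_mapDomain_natCast]
    rfl

theorem nonneg_of_mem_support_mapDomain_add_single {e : (Fin (m + 1) → ℤ) →₀ A}
    (he : ∀ w ∈ e.support, ∀ i : Fin (m + 1), 1 ≤ i.val → 0 ≤ w i) {K : ℕ}
    (hK : ∀ w ∈ e.support, -(K : ℤ) ≤ w 0) :
    ∀ w ∈ (e.mapDomain (· + Pi.single 0 (K : ℤ))).support, ∀ i, 0 ≤ w i := by
  classical
  intro w hw i
  obtain ⟨u, hu, rfl⟩ := Finset.mem_image.1 (Finsupp.mapDomain_support hw)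
  rcases eq_or_ne i 0 with rfl | hi
  · simpa [neg_le_iff_add_nonneg] using hK u hu
  · simpa [Pi.single_eq_of_ne hi] using
      he u hu i (Nat.one_le_iff_ne_zero.2 (Fin.val_ne_zero_iff.2 hi))

-- Multiplying by a large power of `x₁` moves all exponents into `ℕⁿ`, where the basis of `B`
-- applies.
theorem zLinComb_injOn (hx : ∀ a, Commute (S.x 0) (S.ι a)) :
    Set.InjOn S.zLinComb {e | ∀ w ∈ e.support, ∀ i : Fin (m + 1), 1 ≤ i.val → 0 ≤ w i} := by
  classical
  intro e₁ he₁ e₂ he₂ h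
  obtain ⟨K, hK⟩ : ∃ K : ℕ, ∀ w ∈ e₁.support ∪ e₂.support, -(K : ℤ) ≤ w 0 :=
    ⟨(e₁.support ∪ e₂.support).sup fun w => (-w 0).toNat, fun w hw => by
      have := Finset.le_sup (f := fun w : Fin (m + 1) → ℤ => (-w 0).toNat) hw
      omega⟩
  obtain ⟨c₁, hc₁⟩ := Finsupp.exists_eq_mapDomain_natCast
    (nonneg_of_mem_support_mapDomain_add_single he₁ fun w hw => hK w (Finset.mem_union_left _ hw))
  obtain ⟨c₂, hc₂⟩ := Finsupp.exists_eq_mapDomain_natCast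
    (nonneg_of_mem_support_mapDomain_add_single he₂ fun w hw => hK w (Finset.mem_union_right _ hw))
  have hc : c₁ = c₂ := by
    refine S.linComb_injective (numeratorRingHom_powers_injective (isLeftRegular_x_zero hx) ?_)
    rw [← zLinComb_mapDomain_natCast, ← zLinComb_mapDomain_natCast, ← hc₁, ← hc₂,
      zLinComb_mapDomain_add_single hx, zLinComb_mapDomain_add_single hx, h]
  exact Finsupp.mapDomain_injective (add_left_injective _) (hc₁.trans (hc ▸ hc₂.symm))

end Localization

variable {A B : Type*} [Ring A] [Ring B] {m : ℕ} {S : SkewPBW A B (m + 1)}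
  [OreSet (Submonoid.powers (S.x 0))]

noncomputable def locOExt (hσ : ∀ i a, S.σ i a = a) (hqc : ∀ i j b, S.q i j * b = b * S.q i j)
    (hac : ∀ i j t b, S.ac i j t * b = b * S.ac i j t) (ha0 : ∀ i j b, S.a0 i j * b = b * S.a0 i j)
    (hq : ∀ i j, i < j → IsUnit (S.q i j)) (hx : ∀ a, Commute (S.x 0) (S.ι a)) :
    OExt A S.Loc (m + 1) 1 where
  hr := le_rfl
  hrn := Nat.le_add_left 1 m
  ι := numeratorRingHom.comp S.ι
  hι := (numeratorRingHom_powers_injective (isLeftRegular_x_zero hx)).comp S.hι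
  x i := numeratorRingHom (S.x i)
  xinv _ := ↑S.x0Unit⁻¹
  x_mul_xinv i hi := by
    obtain rfl : i = 0 := Fin.ext (Nat.lt_one_iff.1 hi)
    exact S.x0Unit.mul_inv
  xinv_mul_x i hi := by
    obtain rfl : i = 0 := Fin.ext (Nat.lt_one_iff.1 hi)
    exact S.x0Unit.inv_mul
  δ := S.δ
  δ_add := S.δ_add
  δ_mul i a b := by rw [S.δ_mul, hσ, add_comm]
  x_comm i a := by
    simp only [RingHom.comp_apply, ← map_mul, ← map_add, S.x_comm, hσ]
  q := S.qUnit hq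
  q_central := qUnit_commute hqc
  q_diag := qUnit_self
  q_inv _ _ := qUnit_swap
  a0 := S.a0
  ac := S.ac
  a0_central := ha0
  ac_central := hac
  rel i j h := by
    simp only [RingHom.comp_apply, qUnit_of_lt h, ← map_mul, ← map_sum, ← map_add]
    exact congrArg _ (S.rel i j h)
  free f := by
    obtain ⟨e, he, rfl⟩ := exists_zLinComb_eq hx f
    exact ⟨e, ⟨he, rfl⟩, fun e' h' => zLinComb_injOn hx h'.1 he h'.2.symm⟩

end SkewPBW

/-- the localization `D = B S^{-1}` exists and is an extension of `A`
of type `O_{q,δ}^{1,n}` with the same properties. -/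
theorem stmt_14 {A B : Type} [Ring A] [Ring B] {n : ℕ} (hn : 0 < n)
    (S : SkewPBW A B n)
    (hσ : ∀ (i : Fin n) (a : A), S.σ i a = a)
    (hqc : ∀ (i j : Fin n) (b : A), S.q i j * b = b * S.q i j)
    (hacc : ∀ (i j t : Fin n) (b : A), S.ac i j t * b = b * S.ac i j t)
    (ha0c : ∀ (i j : Fin n) (b : A), S.a0 i j * b = b * S.a0 i j)
    (hqu : ∀ i j : Fin n, i < j → IsUnit (S.q i j))
    (hδ1 : ∀ a : A, S.δ ⟨0, hn⟩ a = 0)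
    (hδq : ∀ t i j : Fin n, S.δ t (S.q i j) = 0)
    (hδa0 : ∀ t i j : Fin n, S.δ t (S.a0 i j) = 0)
    (hδac : ∀ t i j m : Fin n, S.δ t (S.ac i j m) = 0)
    (hp1a0 : ∀ j : Fin n, S.a0 ⟨0, hn⟩ j = 0)
    (hp1ac : ∀ j t : Fin n, S.ac ⟨0, hn⟩ j t = 0) :
    ∃ L : SkewPBWLoc A B n S,
      (∀ a : A, L.E.δ L.E.i1 a = 0) ∧
      (∀ t i j : Fin n, L.E.δ t (L.E.q i j : A) = 0) ∧
      (∀ t i j : Fin n, L.E.δ t (L.E.a0 i j) = 0) ∧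
      (∀ t i j m : Fin n, L.E.δ t (L.E.ac i j m) = 0) ∧
      (∀ j : Fin n, L.E.a0 L.E.i1 j = 0) ∧
      (∀ j t : Fin n, L.E.ac L.E.i1 j t = 0) := by
  obtain ⟨m, rfl⟩ : ∃ m, n = m + 1 := ⟨n - 1, by omega⟩
  have hx : ∀ a, Commute (S.x 0) (S.ι a) := fun a => S.commute_x_ι (hσ 0 a) (hδ1 a)
  have ht := S.exists_mon_mul_x_zero hσ hqc hqu hδq hp1a0 hp1ac
  obtain ⟨_⟩ := nonempty_oreSet_powers (S.isRightRegular_x_zero hx ht)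
    (S.exists_x_zero_mul_eq_mul_x_zero hx ht)
  let L : SkewPBWLoc A B (m + 1) S :=
    { D := S.Loc
      φ := (numeratorRingHom : B →+* S.Loc)
      hφ := numeratorRingHom_powers_injective (S.isLeftRegular_x_zero hx)
      E := SkewPBW.locOExt hσ hqc hacc ha0c hqu hx
      hEι := rfl
      hEx := fun _ => rfl
      hEq := fun _ _ => SkewPBW.qUnit_of_lt
      hEa0 := rfl
      hEac := rfl
      hEδ := rfl }
  exact ⟨L, hδ1, SkewPBW.δ_qUnit hδq, hδa0, hδac, hp1a0, hp1ac⟩
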